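/- arXiv:2110.13387 — 3 statements merged into one kernel-verified Lean document; each statement's English description precedes it below -/
import Mathlib

section
/- The Legendre polynomials defined by the recursion (i+1) L_{i+1} = (2i+1) x L_i − i L_{i−1}, L_0 = 1, L_1 = x, satisfy ∫_{-1}^{1} L_i(x)² dx = 2/(2i+1). -/
open Polynomial

/-- Legendre polynomials via the three-term recursion. -/
noncomputable def legendreP : ℕ → ℝ[X]
  | 0 => 1
  | 1 => X
  | (i + 2) =>
      ((2 * ((i : ℝ) + 1) + 1) / ((i : ℝ) + 2)) • (X * legendreP (i + 1))
        - (((i : ℝ) + 1) / ((i : ℝ) + 2)) • legendreP i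

/-!
The polynomial `Lₙ` solves `((1 - x²) Lₙ')' = -n(n+1) Lₙ`. Integrating the Wronskian-type
identity `((1 - x²)(Lₘ Lₙ' - Lₙ Lₘ'))' = (m(m+1) - n(n+1)) Lₘ Lₙ` over `[-1, 1]`, where
`1 - x²` vanishes at both ends, gives orthogonality. Pairing the recursion with `Lₙ` and with
`Lₙ₊₂` and using orthogonality then yields `(2n+3) ‖Lₙ₊₁‖² = (2n+1) ‖Lₙ‖²`, and `‖L₀‖² = 2`.
-/

namespace Polynomial

noncomputable def intervalIntegralₗ (a b : ℝ) : ℝ[X] →ₗ[ℝ] ℝ where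
  toFun p := ∫ x in a..b, p.eval x
  map_add' p q := by
    simp only [eval_add]
    exact intervalIntegral.integral_add (p.continuous.intervalIntegrable a b)
      (q.continuous.intervalIntegrable a b)
  map_smul' c p := by
    simp only [eval_smul, smul_eq_mul, RingHom.id_apply]
    exact intervalIntegral.integral_const_mul c _

variable (a b : ℝ)

@[simp]
lemma intervalIntegralₗ_apply (p : ℝ[X]) :
    intervalIntegralₗ a b p = ∫ x in a..b, p.eval x :=
  rfl

lemma intervalIntegralₗ_derivative (p : ℝ[X]) :
    intervalIntegralₗ a b (derivative p) = p.eval b - p.eval a := by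
  rw [intervalIntegralₗ_apply]
  exact intervalIntegral.integral_deriv_eq_sub' (fun x => p.eval x)
    (_root_.funext fun _ => p.deriv) (fun _ _ => p.differentiableAt)
    (derivative p).continuous.continuousOn

lemma intervalIntegralₗ_C_mul (c : ℝ) (p : ℝ[X]) :
    intervalIntegralₗ a b (C c * p) = c * intervalIntegralₗ a b p := by
  rw [← smul_eq_C_mul, map_smul, smul_eq_mul]

end Polynomial

@[simp]
lemma legendreP_zero : legendreP 0 = 1 := rfl

@[simp]
lemma legendreP_one : legendreP 1 = X := rfl

lemma legendreP_recurrence (n : ℕ) :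
    ((n : ℝ[X]) + 2) * legendreP (n + 2)
      = (2 * (n : ℝ[X]) + 3) * (X * legendreP (n + 1)) - ((n : ℝ[X]) + 1) * legendreP n := by
  have hn : (n : ℝ) + 2 ≠ 0 := by positivity
  have hcoeff (c : ℝ) : ((n : ℝ[X]) + 2) * C (c / (n + 2)) = C c := by
    rw [← C_eq_natCast, ← C_ofNat, ← C_add, ← C_mul, mul_div_cancel₀ _ hn]
  rw [legendreP, smul_eq_C_mul, smul_eq_C_mul, mul_sub, ← mul_assoc _ (C _), ← mul_assoc _ (C _),
    hcoeff, hcoeff]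
  simp only [map_add, map_mul, map_natCast, map_one, map_ofNat]
  ring

lemma derivative_legendreP_succ (n : ℕ) :
    derivative (legendreP (n + 1))
        = X * derivative (legendreP n) + ((n : ℝ[X]) + 1) * legendreP n ∧
      X * derivative (legendreP (n + 1))
        = derivative (legendreP n) + ((n : ℝ[X]) + 1) * legendreP (n + 1) := by
  induction n with
  | zero => simp
  | succ n ih =>
    obtain ⟨h_deriv, h_X_deriv⟩ := ih
    have hd := congrArg derivative (legendreP_recurrence n)
    simp only [derivative_mul, derivative_add, derivative_sub, derivative_natCast,
      derivative_ofNat, derivative_X, derivative_one, zero_mul, one_mul, mul_zero, zero_add,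
      add_zero] at hd
    have hn : (n : ℝ[X]) + 2 ≠ 0 := by exact_mod_cast (n + 1).succ_ne_zero
    push_cast
    constructor
    · apply mul_left_cancel₀ hn
      linear_combination hd + ((n : ℝ[X]) + 1) * h_X_deriv
    · apply mul_left_cancel₀ hn
      linear_combination X * hd + (2 * (n : ℝ[X]) + 3) * X * h_X_deriv - ((n : ℝ[X]) + 2) * h_deriv
        - ((n : ℝ[X]) + 2) * legendreP_recurrence n

lemma derivative_one_sub_X_sq_mul_derivative_legendreP (n : ℕ) :
    derivative ((1 - X ^ 2) * derivative (legendreP n))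
      = -((n : ℝ[X]) * ((n : ℝ[X]) + 1)) * legendreP n := by
  cases n with
  | zero => simp
  | succ n =>
    obtain ⟨h_deriv, h_X_deriv⟩ := derivative_legendreP_succ n
    have hd := congrArg derivative <| show (1 - X ^ 2) * derivative (legendreP (n + 1))
        = ((n : ℝ[X]) + 1) * (legendreP n - X * legendreP (n + 1)) by
      linear_combination h_deriv - X * h_X_deriv
    simp only [derivative_mul, derivative_add, derivative_sub, derivative_natCast,
      derivative_one, derivative_X, derivative_X_sq, C_ofNat, zero_mul, one_mul, zero_add,
      zero_sub] at hd ⊢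
    push_cast
    linear_combination hd - ((n : ℝ[X]) + 1) * h_X_deriv

local notation "Λ" => intervalIntegralₗ (-1) 1

lemma intervalIntegralₗ_legendreP_mul_legendreP_of_ne {m n : ℕ} (hmn : m ≠ n) :
    Λ (legendreP m * legendreP n) = 0 := by
  set W := (1 - X ^ 2) * derivative (legendreP n) * legendreP m
    - (1 - X ^ 2) * derivative (legendreP m) * legendreP n
  have hW : derivative W = C ((m : ℝ) * (m + 1) - n * (n + 1)) * (legendreP m * legendreP n) := by
    rw [derivative_sub, derivative_mul (f := (1 - X ^ 2) * _),
      derivative_mul (f := (1 - X ^ 2) * _),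
      derivative_one_sub_X_sq_mul_derivative_legendreP,
      derivative_one_sub_X_sq_mul_derivative_legendreP]
    simp only [map_sub, map_mul, map_add, map_natCast, map_one]
    ring
  have hc : (m : ℝ) * (m + 1) - n * (n + 1) ≠ 0 := by
    rw [show (m : ℝ) * (m + 1) - n * (n + 1) = (m - n) * (m + n + 1) by ring]
    exact mul_ne_zero (sub_ne_zero.2 (Nat.cast_injective.ne hmn)) (by positivity)
  have hboundary : Λ (derivative W) = 0 := by
    rw [intervalIntegralₗ_derivative]
    simp [W]
  rwa [hW, intervalIntegralₗ_C_mul, mul_eq_zero, or_iff_right hc] at hboundary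

lemma intervalIntegralₗ_legendreP_add_two_mul (n : ℕ) (q : ℝ[X]) :
    (n + 2) * Λ (legendreP (n + 2) * q)
      = (2 * n + 3) * Λ (X * legendreP (n + 1) * q) - (n + 1) * Λ (legendreP n * q) := by
  rw [legendreP, sub_mul, smul_mul_assoc, smul_mul_assoc, map_sub, map_smul, map_smul,
    smul_eq_mul, smul_eq_mul]
  field_simp
  ring

lemma intervalIntegralₗ_X_mul_legendreP_succ_mul_legendreP (n : ℕ) :
    (2 * n + 3) * Λ (X * legendreP (n + 1) * legendreP n)
      = (n + 1) * Λ (legendreP n * legendreP n) := by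
  have h := intervalIntegralₗ_legendreP_add_two_mul n (legendreP n)
  rw [intervalIntegralₗ_legendreP_mul_legendreP_of_ne (by omega : n + 2 ≠ n), mul_zero] at h
  linarith

lemma intervalIntegralₗ_legendreP_succ_mul_self (n : ℕ) :
    (n + 1) * Λ (legendreP (n + 1) * legendreP (n + 1))
      = (2 * n + 1) * Λ (X * legendreP (n + 1) * legendreP n) := by
  cases n with
  | zero => simp
  | succ n =>
    have h := intervalIntegralₗ_legendreP_add_two_mul n (legendreP (n + 2))
    rw [mul_comm (legendreP n),
      intervalIntegralₗ_legendreP_mul_legendreP_of_ne (by omega : n + 2 ≠ n), mul_zero,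
      sub_zero, mul_right_comm X] at h
    push_cast
    linear_combination h

lemma intervalIntegralₗ_legendreP_succ_mul_self_ratio (n : ℕ) :
    (2 * n + 3) * Λ (legendreP (n + 1) * legendreP (n + 1))
      = (2 * n + 1) * Λ (legendreP n * legendreP n) := by
  apply mul_left_cancel₀ (show (n : ℝ) + 1 ≠ 0 by positivity)
  linear_combination (2 * (n : ℝ) + 3) * intervalIntegralₗ_legendreP_succ_mul_self n
    + (2 * (n : ℝ) + 1) * intervalIntegralₗ_X_mul_legendreP_succ_mul_legendreP n

/-- ∫_{-1}^{1} L_i(x)² dx = 2/(2i+1). -/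
theorem legendre_norm (i : ℕ) :
    ∫ x in (-1 : ℝ)..1, (legendreP i).eval x ^ 2 = 2 / (2 * (i : ℝ) + 1) := by
  simp_rw [sq, ← eval_mul, ← intervalIntegralₗ_apply]
  induction i with
  | zero => norm_num
  | succ n ih =>
    have h := intervalIntegralₗ_legendreP_succ_mul_self_ratio n
    rw [ih] at h
    field_simp at h ⊢
    push_cast
    linear_combination h
end

section
/- The Legendre polynomials L_i and L_j are orthogonal on [-1,1]: ∫_{-1}^{1} L_i(x) L_j(x) dx = 0 for i ≠ j. -/
open Polynomial Nat

/-- moment -/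
noncomputable def Mo (n k : ℕ) : ℝ := ∫ x in (-1:ℝ)..1, x ^ k * (legendreP n).eval x

noncomputable def Fo (n k : ℕ) : ℝ := 2 * (k ! : ℝ) / (((k - n)‼ : ℝ) * ((k + n + 1)‼ : ℝ))

lemma contL (n : ℕ) : Continuous fun x : ℝ => (legendreP n).eval x := by
  exact (legendreP n).continuous_aeval

lemma intL (n k : ℕ) : IntervalIntegrable (fun x : ℝ => x ^ k * (legendreP n).eval x)
    MeasureTheory.volume (-1) 1 := ((continuous_pow k).mul (contL n)).intervalIntegrable _ _

lemma Mo_rec (n k : ℕ) :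
    Mo (n+2) k = ((2*(n:ℝ)+3)/((n:ℝ)+2)) * Mo (n+1) (k+1) - (((n:ℝ)+1)/((n:ℝ)+2)) * Mo n k := by
  have e2 : ∀ x : ℝ, x ^ k * (legendreP (n+2)).eval x
      = ((2*(n:ℝ)+3)/((n:ℝ)+2)) * (x ^ (k+1) * (legendreP (n+1)).eval x)
        - (((n:ℝ)+1)/((n:ℝ)+2)) * (x ^ k * (legendreP n).eval x) := by
    intro x; simp [legendreP]; ring
  unfold Mo
  simp_rw [e2]
  rw [intervalIntegral.integral_sub ((intL _ _).const_mul _) ((intL _ _).const_mul _),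
    intervalIntegral.integral_const_mul, intervalIntegral.integral_const_mul]

lemma pow_int (m : ℕ) : (∫ x in (-1:ℝ)..1, x ^ m) = if Even m then 2/((m:ℝ)+1) else 0 := by
  rw [integral_pow]
  rcases Nat.even_or_odd m with h | h
  · rw [if_pos h, one_pow, Odd.neg_one_pow (by simpa using h.add_one)]
    ring
  · rw [if_neg (by simpa using h), one_pow, Even.neg_one_pow (by simpa using h.add_one)]
    ring

lemma Mo_zero (k : ℕ) : Mo 0 k = if Even k then 2/((k:ℝ)+1) else 0 := by
  rw [← pow_int k]
  unfold Mo
  simp [legendreP]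

lemma Mo_one (k : ℕ) : Mo 1 k = if Even (k+1) then 2/((k:ℝ)+2) else 0 := by
  have := pow_int (k+1)
  push_cast at this
  rw [show ((k:ℝ)+2) = (k:ℝ)+1+1 from by ring, ← this]
  unfold Mo
  simp [legendreP, ← pow_succ]

lemma id1 (n : ℕ) : ((2*(n:ℝ)+3)/((n:ℝ)+2)) * Fo (n+1) (n+1) = (((n:ℝ)+1)/((n:ℝ)+2)) * Fo n n := by
  unfold Fo
  have a1 : n+1 - (n+1) = 0 := by omega
  have a2 : n+1 + (n+1) + 1 = (2*n+1)+2 := by omega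
  have a3 : n - n = 0 := by omega
  have a4 : n + n + 1 = 2*n+1 := by omega
  rw [a1, a2, a3, a4, factorial_succ]
  have d2 : ((2*n+1)+2)‼ = (2*n+1+2) * (2*n+1)‼ := Nat.doubleFactorial_add_two _
  rw [d2]
  have hy : (((2*n+1)‼ : ℕ):ℝ) ≠ 0 := by positivity
  have hz : ((n ! : ℕ):ℝ) ≠ 0 := by positivity
  have hn2 : (n:ℝ)+2 ≠ 0 := by positivity
  push_cast
  field_simp
  ring

lemma id2 (n m : ℕ) : Fo (n+2) (n+2+2*m)
    = ((2*(n:ℝ)+3)/((n:ℝ)+2)) * Fo (n+1) (n+3+2*m)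
      - (((n:ℝ)+1)/((n:ℝ)+2)) * Fo n (n+2+2*m) := by
  unfold Fo
  have a1 : n+2+2*m - (n+2) = 2*m := by omega
  have a2 : n+2+2*m + (n+2) + 1 = (2*n+2*m+3)+2 := by omega
  have a3 : n+3+2*m - (n+1) = 2*m+2 := by omega
  have a4 : n+3+2*m + (n+1) + 1 = (2*n+2*m+3)+2 := by omega
  have a5 : n+2+2*m - n = 2*m+2 := by omega
  have a6 : n+2+2*m + n + 1 = 2*n+2*m+3 := by omega
  have a7 : n+3+2*m = (n+2+2*m)+1 := by omega
  rw [a1, a2, a3, a4, a5, a6, a7, factorial_succ]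
  have d1 : (2*m+2)‼ = (2*m+2) * (2*m)‼ := Nat.doubleFactorial_add_two _
  have d2 : ((2*n+2*m+3)+2)‼ = (2*n+2*m+3+2) * (2*n+2*m+3)‼ := Nat.doubleFactorial_add_two _
  rw [d1, d2]
  have hx : (((2*m)‼ : ℕ):ℝ) ≠ 0 := by positivity
  have hy : (((2*n+2*m+3)‼ : ℕ):ℝ) ≠ 0 := by positivity
  have hz : (((n+2+2*m)! : ℕ):ℝ) ≠ 0 := by positivity
  have hn2 : (n:ℝ)+2 ≠ 0 := by positivity
  push_cast
  field_simp
  ring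

lemma key : ∀ n k : ℕ, (k < n → Mo n k = 0) ∧ (Odd (n + k) → Mo n k = 0) ∧
    (n ≤ k → Even (k - n) → Mo n k = Fo n k) := by
  intro n
  induction n using Nat.twoStepInduction with
  | zero =>
    intro k
    refine ⟨fun h => absurd h (Nat.not_lt_zero k), fun h => ?_, fun _ h => ?_⟩
    · rw [Mo_zero, if_neg]
      simpa [Nat.odd_iff, Nat.even_iff] using h
    · rw [Mo_zero, if_pos (by simpa using h)]
      unfold Fo
      have : (k + 0 + 1)‼ * (k - 0)‼ = (k+1)! := by
        simpa using (Nat.factorial_eq_mul_doubleFactorial k).symm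
      rw [show ((k-0)‼ : ℝ) * ((k+0+1)‼:ℝ) = (((k+0+1)‼ * (k-0)‼ : ℕ) : ℝ) from by
        push_cast; ring, this, factorial_succ]
      have hz : ((k ! : ℕ):ℝ) ≠ 0 := by positivity
      have hk : (k:ℝ)+1 ≠ 0 := by positivity
      push_cast
      field_simp
  | one =>
    intro k
    refine ⟨fun h => ?_, fun h => ?_, fun h1 h2 => ?_⟩
    · interval_cases k
      rw [Mo_one, if_neg (by decide)]
    · rw [Mo_one, if_neg]
      intro hc
      rw [Nat.odd_iff] at h; rw [Nat.even_iff] at hc; omega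
    · obtain ⟨j, rfl⟩ : ∃ j, k = j+1 := ⟨k-1, by omega⟩
      rw [Mo_one, if_pos (by rw [Nat.even_iff]; rw [Nat.even_iff] at h2; omega)]
      unfold Fo
      have a1 : j+1-1 = j := by omega
      have a2 : j+1+1+1 = j+1+2 := by omega
      rw [a1, a2, Nat.doubleFactorial_add_two]
      have : (j + 1)‼ * j‼ = (j+1)! := (Nat.factorial_eq_mul_doubleFactorial j).symm
      rw [show (j‼ : ℝ) * (((j+1+2) * (j+1)‼ : ℕ):ℝ)
          = ((j+1+2 : ℕ):ℝ) * (((j+1)‼ * j‼ : ℕ):ℝ) from by push_cast; ring, this,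
        factorial_succ]
      have hz : ((j ! : ℕ):ℝ) ≠ 0 := by positivity
      have hj : (j:ℝ)+1 ≠ 0 := by positivity
      have hj3 : (j:ℝ)+3 ≠ 0 := by positivity
      push_cast
      field_simp
  | more n ihn ihn1 =>
    intro k
    have hpar : Odd (n + 2 + k) → Mo (n+2) k = 0 := by
      intro h
      rw [Mo_rec, (ihn1 (k+1)).2.1 (by rw [Nat.odd_iff] at h ⊢; omega),
        (ihn k).2.1 (by rw [Nat.odd_iff] at h ⊢; omega)]
      ring
    refine ⟨fun h => ?_, hpar, fun h1 h2 => ?_⟩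
    · by_cases hp : Odd (n + 2 + k)
      · exact hpar hp
      · rw [Nat.odd_iff] at hp
        rcases Nat.lt_or_ge k n with hk | hk
        · rw [Mo_rec, (ihn1 (k+1)).1 (by omega), (ihn k).1 (by omega)]
          ring
        · have hkn : k = n := by omega
          subst hkn
          rw [Mo_rec, (ihn1 (k+1)).2.2 le_rfl (by simp),
            (ihn k).2.2 le_rfl (by simp), id1]
          ring
    · obtain ⟨m, hm⟩ : ∃ m, k = n + 2 + 2*m := by
        rw [Nat.even_iff] at h2; exact ⟨(k - (n+2))/2, by omega⟩
      subst hm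
      rw [Mo_rec, show n+2+2*m+1 = n+3+2*m from by omega,
        (ihn1 (n+3+2*m)).2.2 (by omega)
          (by rw [show n+3+2*m-(n+1) = 2*(m+1) from by omega]; exact ⟨m+1, by omega⟩),
        (ihn (n+2+2*m)).2.2 (by omega)
          (by rw [show n+2+2*m-n = 2*(m+1) from by omega]; exact ⟨m+1, by omega⟩)]
      exact (id2 n m).symm

lemma deg_le (n : ℕ) : (legendreP n).natDegree ≤ n := by
  induction n using Nat.twoStepInduction with
  | zero => simp [legendreP]
  | one => simpa [legendreP] using natDegree_X_le
  | more n ihn ihn1 =>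
    rw [show legendreP (n+2) = ((2*((n:ℝ)+1)+1)/((n:ℝ)+2)) • (X * legendreP (n+1))
        - (((n:ℝ)+1)/((n:ℝ)+2)) • legendreP n from rfl]
    refine le_trans (natDegree_sub_le _ _) (max_le ?_ ?_)
    · refine le_trans (natDegree_smul_le _ _) (le_trans natDegree_mul_le ?_)
      have := natDegree_X_le (R := ℝ)
      omega
    · exact le_trans (natDegree_smul_le _ _) (by omega)

lemma ortho_lt (i j : ℕ) (h : i < j) :
    ∫ x in (-1 : ℝ)..1, (legendreP i).eval x * (legendreP j).eval x = 0 := by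
  have hd : (legendreP i).natDegree < i + 1 := lt_of_le_of_lt (deg_le i) (lt_add_one i)
  have e : ∀ x : ℝ, (legendreP i).eval x * (legendreP j).eval x
      = ∑ k ∈ Finset.range (i+1), (legendreP i).coeff k * (x ^ k * (legendreP j).eval x) := by
    intro x
    rw [eval_eq_sum_range' hd x, Finset.sum_mul]
    exact Finset.sum_congr rfl fun _ _ => by ring
  simp_rw [e]
  rw [intervalIntegral.integral_finset_sum (fun k _ => (intL j k).const_mul _)]
  refine Finset.sum_eq_zero fun k hk => ?_
  rw [intervalIntegral.integral_const_mul]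
  have hz : Mo j k = 0 := (key j k).1 (by simp only [Finset.mem_range] at hk; omega)
  unfold Mo at hz
  rw [hz, mul_zero]

/-- Orthogonality of the Legendre polynomials on [-1,1]. -/
theorem legendre_orthogonal (i j : ℕ) (hij : i ≠ j) :
    ∫ x in (-1 : ℝ)..1, (legendreP i).eval x * (legendreP j).eval x = 0 := by
  rcases hij.lt_or_gt with h | h
  · exact ortho_lt i j h
  · rw [show (fun x => (legendreP i).eval x * (legendreP j).eval x)
        = fun x : ℝ => (legendreP j).eval x * (legendreP i).eval x from by
          funext x; ring]
    exact ortho_lt j i h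
end

section
/- The normalized Legendre polynomials N_i = sqrt((2i+1)/2) L_i form an orthonormal family in L²([-1,1]): ∫_{-1}^{1} N_i N_j dx equals 1 if i = j and 0 otherwise. -/
open Polynomial

/-- Normalized Legendre polynomials N_i = sqrt((2i+1)/2) L_i. -/
noncomputable def normLegendreP (i : ℕ) : ℝ[X] :=
  Real.sqrt ((2 * (i : ℝ) + 1) / 2) • legendreP i

open Nat

noncomputable def J (p : ℝ[X]) : ℝ := ∫ x in (-1:ℝ)..1, p.eval x

lemma J_integrable (p : ℝ[X]) :
    IntervalIntegrable (fun x => p.eval x) MeasureTheory.volume (-1:ℝ) 1 :=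
  p.continuous.intervalIntegrable _ _

lemma J_smul (c : ℝ) (p : ℝ[X]) : J (c • p) = c * J p := by
  simp [J, ← intervalIntegral.integral_smul, smul_eq_mul]

lemma J_sub (p q : ℝ[X]) : J (p - q) = J p - J q := by
  simp only [J, eval_sub]
  exact intervalIntegral.integral_sub (J_integrable p) (J_integrable q)

lemma J_sum (s : Finset ℕ) (f : ℕ → ℝ[X]) : J (∑ i ∈ s, f i) = ∑ i ∈ s, J (f i) := by
  simp only [J, eval_finset_sum]
  exact intervalIntegral.integral_finset_sum (fun i _ => J_integrable (f i))

lemma J_pow (k : ℕ) : J (X ^ k) = if Even k then 2 / ((k : ℝ) + 1) else 0 := by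
  have h : J (X ^ k) = ∫ x in (-1:ℝ)..1, x ^ k := by simp [J]
  rw [h, integral_pow]
  rcases Nat.even_or_odd k with hk | hk
  · rw [if_pos hk]
    rw [(by simpa using hk.add_one : Odd (k+1)).neg_one_pow]
    ring
  · rw [if_neg (by simpa using hk)]
    rw [(by simpa using hk.add_one : Even (k+1)).neg_one_pow]
    simp

lemma J_rec (k n : ℕ) :
    J (X ^ k * legendreP (n + 2))
      = (2 * ((n : ℝ) + 1) + 1) / ((n : ℝ) + 2) * J (X ^ (k+1) * legendreP (n + 1))
        - ((n : ℝ) + 1) / ((n : ℝ) + 2) * J (X ^ k * legendreP n) := by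
  have h : legendreP (n+2)
      = ((2 * ((n : ℝ) + 1) + 1) / ((n : ℝ) + 2)) • (X * legendreP (n + 1))
        - (((n : ℝ) + 1) / ((n : ℝ) + 2)) • legendreP n := rfl
  have e1 : X ^ k * (((2 * ((n : ℝ) + 1) + 1) / ((n : ℝ) + 2)) • (X * legendreP (n + 1)))
      = ((2 * ((n : ℝ) + 1) + 1) / ((n : ℝ) + 2)) • (X ^ (k+1) * legendreP (n + 1)) := by
    rw [mul_smul_comm]; ring_nf
  have e2 : X ^ k * ((((n : ℝ) + 1) / ((n : ℝ) + 2)) • legendreP n)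
      = (((n : ℝ) + 1) / ((n : ℝ) + 2)) • (X ^ k * legendreP n) := (mul_smul_comm _ _ _)
  rw [h, mul_sub, e1, e2, J_sub, J_smul, J_smul]

noncomputable def F (k n : ℕ) : ℝ :=
  if n ≤ k ∧ Even (k - n) then
    2 * k.factorial / (((k - n)‼ * (k + n + 1)‼ : ℕ) : ℝ) else 0

lemma F_zero (k : ℕ) : F k 0 = if Even k then 2 / ((k : ℝ) + 1) else 0 := by
  unfold F
  rcases Nat.even_or_odd k with hk | hk
  · rw [if_pos ⟨Nat.zero_le _, by simpa using hk⟩, if_pos hk]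
    have h1 : (k + 1)! = (k+1)‼ * k‼ := Nat.factorial_eq_mul_doubleFactorial k
    have h2 : ((k - 0)‼ * (k + 0 + 1)‼ : ℕ) = (k+1)! := by
      rw [h1]; simp [Nat.mul_comm]
    rw [h2]
    have h3 : ((k+1)! : ℝ) = ((k:ℝ)+1) * (k ! : ℝ) := by
      rw [Nat.factorial_succ]; push_cast; ring
    rw [h3]
    rw [div_eq_div_iff (by positivity) (by positivity)]
    ring
  · rw [Nat.odd_iff] at hk
    rw [if_neg (by rw [Nat.even_iff]; rintro ⟨-, h⟩; omega), if_neg (by rw [Nat.even_iff]; omega)]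

lemma F_one (k : ℕ) : F k 1 = if Even (k+1) then 2 / ((k : ℝ) + 2) else 0 := by
  unfold F
  match k with
  | 0 => norm_num
  | (m+1) =>
    have hsub : m + 1 - 1 = m := rfl
    rcases Nat.even_or_odd m with hm | hm
    · rw [if_pos ⟨by omega, by simpa [hsub] using hm⟩,
        if_pos (by rw [Nat.even_iff] at hm ⊢; omega)]
      have h1 : (m + 1 + 1 + 1)‼ = (m+3) * (m+1)‼ := Nat.doubleFactorial_add_two (m+1)
      have h2 : (m + 1)! = (m+1)‼ * m‼ := Nat.factorial_eq_mul_doubleFactorial m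
      rw [hsub, h1, h2]
      have hp1 : (0:ℝ) < ((m+1)‼ : ℝ) := by exact_mod_cast Nat.doubleFactorial_pos _
      have hp2 : (0:ℝ) < (m‼ : ℝ) := by exact_mod_cast Nat.doubleFactorial_pos _
      push_cast
      rw [div_eq_div_iff (by positivity) (by positivity)]
      ring
    · rw [Nat.odd_iff] at hm
      rw [if_neg (by rw [hsub, Nat.even_iff]; rintro ⟨-, h⟩; omega),
        if_neg (by rw [Nat.even_iff]; omega)]

lemma J_pow_legendre : ∀ n k : ℕ, J (X ^ k * legendreP n) = F k n := by
  intro n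
  induction n using Nat.twoStepInduction with
  | zero =>
    intro k
    rw [show legendreP 0 = 1 from rfl, mul_one, J_pow, F_zero]
  | one =>
    intro k
    rw [show legendreP 1 = X from rfl, ← pow_succ, J_pow, F_one]
    push_cast
    ring_nf
  | more n ih ih1 =>
    intro k
    rw [J_rec, ih1 (k+1), ih k]
    unfold F
    by_cases hc : n ≤ k ∧ Even (k - n)
    · obtain ⟨hle, hev⟩ := hc
      rw [Nat.even_iff] at hev
      rcases Nat.lt_or_ge k (n+2) with hk2 | hk2
      · -- k = n
        have hkn : k = n := by omega
        subst hkn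
        rw [if_pos ⟨le_refl _, by simp⟩, if_pos ⟨le_refl _, by simp⟩,
          if_neg (by rintro ⟨h, -⟩; omega)]
        have e1 : k + 1 - (k + 1) = 0 := by omega
        have e2 : k - k = 0 := by omega
        have e3 : k + 1 + (k + 1) + 1 = (k + k + 1) + 2 := by omega
        rw [e1, e2, e3, Nat.doubleFactorial_add_two, Nat.factorial_succ]
        have hd : (0:ℝ) < ((k + k + 1)‼ : ℝ) := by exact_mod_cast Nat.doubleFactorial_pos _
        have hf : (0:ℝ) < ((k)! : ℝ) := by exact_mod_cast Nat.factorial_pos _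
        push_cast
        field_simp
        ring
      · -- k ≥ n + 2
        obtain ⟨s, rfl⟩ : ∃ s, k = n + 2 + 2*s := ⟨(k - n - 2)/2, by omega⟩
        rw [if_pos ⟨by omega, by rw [Nat.even_iff]; omega⟩,
          if_pos ⟨by omega, by rw [Nat.even_iff]; omega⟩,
          if_pos ⟨by omega, by rw [Nat.even_iff]; omega⟩]
        have e1 : n + 2 + 2*s + 1 - (n + 1) = 2*s + 2 := by omega
        have e2 : n + 2 + 2*s - n = 2*s + 2 := by omega
        have e3 : n + 2 + 2*s + 1 + (n + 1) + 1 = (2*n + 2*s + 3) + 2 := by omega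
        have e4 : n + 2 + 2*s + (n + 2) + 1 = (2*n + 2*s + 3) + 2 := by omega
        have e5 : n + 2 + 2*s - (n + 2) = 2*s := by omega
        have e6 : n + 2 + 2*s + n + 1 = (2*n + 2*s + 3) := by omega
        have e7 : n + 2 + 2*s + 1 = (n + 2 + 2*s) + 1 := rfl
        rw [e1, e2, e3, e4, e5, e6, e7, Nat.doubleFactorial_add_two (2*s),
          Nat.doubleFactorial_add_two (2*n + 2*s + 3), Nat.factorial_succ]
        have hd1 : (0:ℝ) < (((2*s))‼ : ℝ) := by exact_mod_cast Nat.doubleFactorial_pos _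
        have hd2 : (0:ℝ) < ((2*n + 2*s + 3)‼ : ℝ) := by exact_mod_cast Nat.doubleFactorial_pos _
        have hf : (0:ℝ) < ((n + 2 + 2*s)! : ℝ) := by exact_mod_cast Nat.factorial_pos _
        push_cast
        field_simp
        ring
    · rw [if_neg hc,
        if_neg (by rintro ⟨h1, h2⟩; rw [Nat.even_iff] at h2
                   exact hc ⟨by omega, by rw [Nat.even_iff]; omega⟩),
        if_neg (by rintro ⟨h1, h2⟩; rw [Nat.even_iff] at h2
                   exact hc ⟨by omega, by rw [Nat.even_iff]; omega⟩)]
      ring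

lemma legendre_natDegree_le : ∀ n : ℕ, (legendreP n).natDegree ≤ n := by
  intro n
  induction n using Nat.twoStepInduction with
  | zero => simp [legendreP]
  | one => simp [legendreP]
  | more n ih ih1 =>
    have h : legendreP (n+2)
        = ((2 * ((n : ℝ) + 1) + 1) / ((n : ℝ) + 2)) • (X * legendreP (n + 1))
          - (((n : ℝ) + 1) / ((n : ℝ) + 2)) • legendreP n := rfl
    rw [h]
    refine le_trans (natDegree_sub_le _ _) (max_le ?_ ?_)
    · refine le_trans (natDegree_smul_le _ _) (le_trans (natDegree_mul_le) ?_)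
      have h2 : (X : ℝ[X]).natDegree + (legendreP (n+1)).natDegree ≤ 1 + (n+1) :=
        _root_.add_le_add natDegree_X_le ih1
      omega
    · exact le_trans (natDegree_smul_le _ _) (le_trans ih (by omega))

lemma legendre_coeff : ∀ n : ℕ, (legendreP n).coeff n
    = ((2*n)! : ℝ) / (2^n * ((n)! : ℝ)^2) := by
  intro n
  induction n using Nat.twoStepInduction with
  | zero => simp [legendreP]
  | one => simp [legendreP]
  | more n ih ih1 =>
    have h : legendreP (n+2)
        = ((2 * ((n : ℝ) + 1) + 1) / ((n : ℝ) + 2)) • (X * legendreP (n + 1))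
          - (((n : ℝ) + 1) / ((n : ℝ) + 2)) • legendreP n := rfl
    rw [h, coeff_sub, coeff_smul, coeff_smul, coeff_X_mul, ih1,
      coeff_eq_zero_of_natDegree_lt (lt_of_le_of_lt (legendre_natDegree_le n) (by omega)),
      smul_eq_mul, smul_eq_mul, mul_zero, sub_zero]
    have f1 : ((2*(n+2))! : ℝ) = (2*(n:ℝ)+4)*(2*(n:ℝ)+3) * ((2*(n+1))! : ℝ) := by
      have e : 2*(n+2) = 2*(n+1) + 1 + 1 := by omega
      rw [e, Nat.factorial_succ, Nat.factorial_succ]; push_cast; ring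
    have f2 : (((n+2) : ℕ)! : ℝ) = ((n:ℝ)+2) * (((n+1) : ℕ)! : ℝ) := by
      rw [Nat.factorial_succ]; push_cast; ring
    rw [f1, f2]
    have h2 : (0:ℝ) < (((n+1))! : ℝ) := by exact_mod_cast Nat.factorial_pos _
    have h3 : (0:ℝ) < ((2*(n+1))! : ℝ) := by exact_mod_cast Nat.factorial_pos _
    field_simp
    ring

lemma legendre_coeff_pos (n : ℕ) : 0 < (legendreP n).coeff n := by
  rw [legendre_coeff]
  have h1 : (0:ℝ) < ((2*n)! : ℝ) := by exact_mod_cast Nat.factorial_pos _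
  have h2 : (0:ℝ) < ((n)! : ℝ) := by exact_mod_cast Nat.factorial_pos _
  positivity

lemma legendre_natDegree (n : ℕ) : (legendreP n).natDegree = n :=
  le_antisymm (legendre_natDegree_le n)
    (le_natDegree_of_ne_zero (ne_of_gt (legendre_coeff_pos n)))

lemma J_mul_legendre (p : ℝ[X]) (n : ℕ) :
    J (p * legendreP n) = ∑ k ∈ Finset.range (p.natDegree + 1), p.coeff k * F k n := by
  conv_lhs => rw [p.as_sum_range_C_mul_X_pow, Finset.sum_mul]
  rw [J_sum]
  refine Finset.sum_congr rfl fun k _ => ?_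
  rw [show C (p.coeff k) * X ^ k * legendreP n = p.coeff k • (X ^ k * legendreP n) by
    rw [smul_eq_C_mul, mul_assoc], J_smul, J_pow_legendre]

lemma J_legendre_ne (i j : ℕ) (h : i < j) : J (legendreP i * legendreP j) = 0 := by
  rw [J_mul_legendre, legendre_natDegree]
  refine Finset.sum_eq_zero fun k hk => ?_
  have hk' : k ≤ i := Nat.lt_succ_iff.mp (Finset.mem_range.mp hk)
  have hF : F k j = 0 := by unfold F; rw [if_neg (by rintro ⟨h1, -⟩; omega)]
  rw [hF, mul_zero]

lemma J_legendre_self (n : ℕ) : J (legendreP n * legendreP n) = 2 / (2*(n:ℝ)+1) := by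
  rw [J_mul_legendre, legendre_natDegree]
  rw [Finset.sum_eq_single n]
  · rw [legendre_coeff]
    unfold F
    rw [if_pos ⟨le_refl _, by simp⟩, Nat.sub_self]
    have h1 : (n+n+1)‼ * (2^n * (n)!) = (2*n+1) * (2*n)! := by
      have e : n+n+1 = 2*n+1 := by omega
      rw [e]
      calc (2*n+1)‼ * (2^n * (n)!) = (2*n+1)‼ * (2*n)‼ := by
            rw [Nat.doubleFactorial_two_mul]
        _ = (2*n+1)! := (Nat.factorial_eq_mul_doubleFactorial (2*n)).symm
        _ = (2*n+1) * (2*n)! := Nat.factorial_succ _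
    have h1' : ((n+n+1)‼ : ℝ) * (2^n * ((n)! : ℝ)) = (2*(n:ℝ)+1) * ((2*n)! : ℝ) := by
      have := congrArg (Nat.cast (R := ℝ)) h1
      push_cast at this
      linarith [this]
    have hA : ((n+n+1)‼ : ℝ) = (2*(n:ℝ)+1) * ((2*n)! : ℝ) / (2^n * ((n)! : ℝ)) := by
      rw [eq_div_iff (by positivity)]
      exact h1'
    push_cast
    rw [show ((0:ℕ)‼ : ℝ) = 1 from by norm_num [Nat.doubleFactorial], hA]
    have hf : (0:ℝ) < ((n)! : ℝ) := by exact_mod_cast Nat.factorial_pos _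
    have hf2 : (0:ℝ) < ((2*n)! : ℝ) := by exact_mod_cast Nat.factorial_pos _
    have hn : (0:ℝ) < 2*(n:ℝ)+1 := by positivity
    field_simp
  · intro k hk hkn
    have hk' : k ≤ n := Nat.lt_succ_iff.mp (Finset.mem_range.mp hk)
    have hF : F k n = 0 := by
      unfold F; rw [if_neg (by rintro ⟨h1, -⟩; omega)]
    rw [hF, mul_zero]
  · intro h; exact absurd (Finset.self_mem_range_succ n) h

lemma main_le (i j : ℕ) (h : i ≤ j) :
    ∫ x in (-1 : ℝ)..1, (normLegendreP i).eval x * (normLegendreP j).eval x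
      = if i = j then 1 else 0 := by
  have hJ : ∫ x in (-1 : ℝ)..1, (normLegendreP i).eval x * (normLegendreP j).eval x
      = J (normLegendreP i * normLegendreP j) := by simp [J]
  rw [hJ]
  unfold normLegendreP
  rw [smul_mul_assoc, mul_smul_comm, J_smul, J_smul]
  by_cases hij : i = j
  · subst hij
    rw [if_pos rfl, J_legendre_self, ← mul_assoc,
      Real.mul_self_sqrt (by positivity)]
    have hn : (0:ℝ) < 2*(i:ℝ)+1 := by positivity
    field_simp
  · rw [if_neg hij, J_legendre_ne i j (lt_of_le_of_ne h hij), mul_zero, mul_zero]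

/-- The normalized Legendre polynomials are orthonormal on [-1,1]. -/
theorem normalized_legendre_orthonormal (i j : ℕ) :
    ∫ x in (-1 : ℝ)..1, (normLegendreP i).eval x * (normLegendreP j).eval x
      = if i = j then 1 else 0 := by
  rcases le_total i j with h | h
  · exact main_le i j h
  · rw [show (∫ x in (-1:ℝ)..1, (normLegendreP i).eval x * (normLegendreP j).eval x)
        = ∫ x in (-1:ℝ)..1, (normLegendreP j).eval x * (normLegendreP i).eval x from by
        simp [mul_comm], main_le j i h]
    by_cases hij : i = j
    · simp [hij]
    · rw [if_neg hij, if_neg (fun hh => hij hh.symm)]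
end
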